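/- arXiv:2605.09162 — 5 statements merged into one kernel-verified Lean document; each statement's English description precedes it below -/
import Mathlib

section
/- Let h be a polynomial in n real variables with homogeneous components φ_k, and let d ∈ ℝ^n. Suppose μ ≥ 2 is such that φ_μ(d) < 0 and φ_k(d) = 0 for all k > μ. Then h(t·d)/t tends to −∞ as t → ∞ (i.e., the asymptotic value of h along the ray through d is −∞). -/
open MvPolynomial Filter

/-!
Since `φ_k` is homogeneous of degree `k`, `h (t • d) = ∑ₖ φ_k(d) tᵏ` is a univariate polynomial
in `t`. The hypotheses say it has degree `μ ≥ 2` and negative leading coefficient `φ_μ(d)`, so its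
quotient by `t` still tends to `-∞`.
-/

namespace MvPolynomial

variable {σ R : Type*} [CommSemiring R]

theorem IsHomogeneous.eval_smul {p : MvPolynomial σ R} {k : ℕ} (hp : p.IsHomogeneous k)
    (t : R) (d : σ → R) : eval (t • d) p = t ^ k * eval d p := by
  rw [eval_eq, eval_eq, Finset.mul_sum]
  refine Finset.sum_congr rfl fun m hm => ?_
  have hdeg : ∑ i ∈ m.support, m i = k := by
    rw [← Finsupp.degree_apply, Finsupp.degree_eq_weight_one]
    exact hp (mem_support_iff.mp hm)
  simp only [Pi.smul_apply, smul_eq_mul, mul_pow, Finset.prod_mul_distrib,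
    Finset.prod_pow_eq_pow_sum, hdeg]
  ring

noncomputable def rayPolynomial (p : MvPolynomial σ R) (d : σ → R) : Polynomial R :=
  ∑ k ∈ Finset.range (p.totalDegree + 1),
    Polynomial.C (eval d (homogeneousComponent k p)) * Polynomial.X ^ k

variable (p : MvPolynomial σ R) (d : σ → R)

theorem coeff_rayPolynomial (k : ℕ) :
    (rayPolynomial p d).coeff k = eval d (homogeneousComponent k p) := by
  simp only [rayPolynomial, Polynomial.finsetSum_coeff, Polynomial.coeff_C_mul_X_pow,
    Finset.sum_ite_eq, Finset.mem_range]
  split_ifs with hk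
  · rfl
  · rw [homogeneousComponent_eq_zero k p (by omega), map_zero]

theorem eval_rayPolynomial (t : R) : (rayPolynomial p d).eval t = eval (t • d) p := by
  conv_rhs => rw [← sum_homogeneousComponent p]
  simp only [rayPolynomial, Polynomial.eval_finsetSum, Polynomial.eval_C_mul,
    Polynomial.eval_X_pow, map_sum, (homogeneousComponent_isHomogeneous _ p).eval_smul]
  exact Finset.sum_congr rfl fun _ _ => mul_comm _ _

theorem degree_rayPolynomial {μ : ℕ} (hμ : eval d (homogeneousComponent μ p) ≠ 0)
    (hvan : ∀ k, μ < k → eval d (homogeneousComponent k p) = 0) :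
    (rayPolynomial p d).degree = μ := by
  refine Polynomial.degree_eq_of_le_of_coeff_ne_zero ?_ (by rwa [coeff_rayPolynomial])
  refine (Polynomial.degree_le_iff_coeff_zero _ _).mpr fun k hk => ?_
  rw [coeff_rayPolynomial]
  exact hvan k (by exact_mod_cast hk)

end MvPolynomial

theorem stmt_2 (n : ℕ) (h : MvPolynomial (Fin n) ℝ) (d : Fin n → ℝ) (μ : ℕ)
    (hμ : 2 ≤ μ)
    (hneg : MvPolynomial.eval d (MvPolynomial.homogeneousComponent μ h) < 0)
    (hvan : ∀ k, μ < k → MvPolynomial.eval d (MvPolynomial.homogeneousComponent k h) = 0) :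
    Filter.Tendsto (fun t : ℝ => MvPolynomial.eval (t • d) h / t) Filter.atTop Filter.atBot := by
  have hdeg := degree_rayPolynomial h d hneg.ne hvan
  have hlead : (rayPolynomial h d).leadingCoeff = eval d (homogeneousComponent μ h) := by
    rw [Polynomial.leadingCoeff, Polynomial.natDegree_eq_of_degree_eq_some hdeg,
      coeff_rayPolynomial]
  have hlt : (Polynomial.X : Polynomial ℝ).degree < (rayPolynomial h d).degree := by
    rw [hdeg, Polynomial.degree_X]
    exact_mod_cast hμ
  simpa [eval_rayPolynomial, hlead] using
    Polynomial.div_tendsto_atBot_of_degree_gt' _ _ hlt (by simpa [hlead] using hneg)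
end

section
/- Directional certificate for unboundedness: let f, g_1, …, g_m be polynomials in n real variables and let X := {x ∈ ℝ^n : g_i(x) ≤ 0 for all i = 1, …, m}. Suppose there exists a direction d ∈ ℝ^n such that for every h ∈ {f, g_1, …, g_m} there exists μ_h ≥ 1 with φ_{h,μ_h}(d) < 0 and φ_{h,k}(d) = 0 for all k > μ_h. Then the problem inf_{x ∈ X} f(x) is unbounded below: for every M ∈ ℝ there exists x with g_i(x) ≤ 0 for all i and f(x) < M (equivalently, the image f(X) is not bounded below). -/
open MvPolynomial Filter

lemma aux_eval_smul {n : ℕ} {p : MvPolynomial (Fin n) ℝ} {k : ℕ} (hp : p.IsHomogeneous k)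
    (t : ℝ) (d : Fin n → ℝ) : eval (t • d) p = t ^ k * eval d p := by
  rw [eval_eq', eval_eq', Finset.mul_sum]
  apply Finset.sum_congr rfl
  intro s hs
  have hk := hp (mem_support_iff.mp hs)
  have hsum : ∑ i, s i = k := by
    rw [← hk]
    rw [Finsupp.weight_apply]
    simp [Finsupp.sum]
    exact (Finset.sum_subset (Finset.subset_univ _) (by intro x _ hx; simpa using Finsupp.notMem_support_iff.mp hx)).symm
  simp only [Pi.smul_apply, smul_eq_mul, mul_pow]
  rw [Finset.prod_mul_distrib, Finset.prod_pow_eq_pow_sum, hsum]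
  ring

lemma aux_expand {n : ℕ} (h : MvPolynomial (Fin n) ℝ) {N : ℕ} (hN : h.totalDegree < N)
    (t : ℝ) (d : Fin n → ℝ) :
    eval (t • d) h = ∑ k ∈ Finset.range N, eval d (homogeneousComponent k h) * t ^ k := by
  conv_lhs => rw [← sum_homogeneousComponent h]
  rw [← Finset.sum_range_add_sum_Ico (fun k => eval d (homogeneousComponent k h) * t ^ k) (Nat.succ_le_of_lt hN)]
  rw [map_sum]
  have : ∀ k ∈ Finset.Ico (h.totalDegree + 1) N, eval d (homogeneousComponent k h) * t ^ k = 0 := by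
    intro k hk
    rw [homogeneousComponent_eq_zero _ _ (Nat.lt_of_succ_le (Finset.mem_Ico.mp hk).1)]
    simp
  rw [Finset.sum_eq_zero this, add_zero]
  apply Finset.sum_congr rfl
  intro k hk
  rw [aux_eval_smul (homogeneousComponent_isHomogeneous k h) t d]
  ring

lemma aux_tendsto (c : ℕ → ℝ) (N μ : ℕ) (h1 : 1 ≤ μ) (hμN : μ < N) (hneg : c μ < 0)
    (hz : ∀ k, μ < k → c k = 0) :
    Tendsto (fun t : ℝ => ∑ k ∈ Finset.range N, c k * t ^ k) atTop atBot := by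
  set p : Polynomial ℝ := ∑ k ∈ Finset.range N, Polynomial.C (c k) * Polynomial.X ^ k with hp
  have heval : ∀ t : ℝ, Polynomial.eval t p = ∑ k ∈ Finset.range N, c k * t ^ k := by
    intro t; simp [hp, Polynomial.eval_finset_sum]
  have hcoeff : ∀ j, p.coeff j = if j ∈ Finset.range N then c j else 0 := by
    intro j
    rw [hp, Polynomial.finset_sum_coeff]
    simp [Polynomial.coeff_C_mul, Polynomial.coeff_X_pow, Finset.sum_ite_eq]
  have hle : p.natDegree ≤ μ := by
    apply Polynomial.natDegree_le_iff_coeff_eq_zero.mpr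
    intro j hj
    rw [hcoeff]
    split
    · exact hz j hj
    · rfl
  have hcμ : p.coeff μ = c μ := by rw [hcoeff]; simp [Finset.mem_range.mpr hμN]
  have hge : μ ≤ p.natDegree := Polynomial.le_natDegree_of_ne_zero (by rw [hcμ]; exact hneg.ne)
  have hnd : p.natDegree = μ := le_antisymm hle hge
  have hp0 : p ≠ 0 := by
    intro h0
    rw [h0, Polynomial.coeff_zero] at hcμ
    exact hneg.ne hcμ.symm
  have hlc : p.leadingCoeff = c μ := by rw [Polynomial.leadingCoeff, hnd, hcμ]
  have hdeg : 0 < p.degree := by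
    rw [Polynomial.degree_eq_natDegree hp0, hnd]
    exact_mod_cast Nat.lt_of_lt_of_le Nat.zero_lt_one h1
  have := Polynomial.tendsto_atBot_of_leadingCoeff_nonpos p hdeg (by rw [hlc]; exact hneg.le)
  exact this.congr heval

lemma aux_ray {n : ℕ} (h : MvPolynomial (Fin n) ℝ) (d : Fin n → ℝ)
    (hyp : ∃ μ : ℕ, 1 ≤ μ ∧ eval d (homogeneousComponent μ h) < 0 ∧
      ∀ k, μ < k → eval d (homogeneousComponent k h) = 0) :
    Tendsto (fun t : ℝ => eval (t • d) h) atTop atBot := by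
  obtain ⟨μ, h1, hneg, hz⟩ := hyp
  set N := max (h.totalDegree + 1) (μ + 1) with hNdef
  have hN : h.totalDegree < N := lt_of_lt_of_le (Nat.lt_succ_self _) (le_max_left _ _)
  have hμN : μ < N := lt_of_lt_of_le (Nat.lt_succ_self _) (le_max_right _ _)
  have := aux_tendsto (fun k => eval d (homogeneousComponent k h)) N μ h1 hμN hneg hz
  exact this.congr (fun t => (aux_expand h hN t d).symm)

theorem stmt_6 (n m : ℕ) (f : MvPolynomial (Fin n) ℝ) (g : Fin m → MvPolynomial (Fin n) ℝ)
    (hd : ∃ d : Fin n → ℝ,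
      (∃ μ : ℕ, 1 ≤ μ ∧
        MvPolynomial.eval d (MvPolynomial.homogeneousComponent μ f) < 0 ∧
        ∀ k, μ < k → MvPolynomial.eval d (MvPolynomial.homogeneousComponent k f) = 0) ∧
      ∀ i : Fin m, ∃ μ : ℕ, 1 ≤ μ ∧
        MvPolynomial.eval d (MvPolynomial.homogeneousComponent μ (g i)) < 0 ∧
        ∀ k, μ < k → MvPolynomial.eval d (MvPolynomial.homogeneousComponent k (g i)) = 0) :
    ∀ M : ℝ, ∃ x : Fin n → ℝ,
      (∀ i : Fin m, MvPolynomial.eval x (g i) ≤ 0) ∧ MvPolynomial.eval x f < M := by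
  obtain ⟨d, hf, hg⟩ := hd
  intro M
  have Hf := aux_ray f d hf
  have h1 : ∀ᶠ t : ℝ in atTop, eval (t • d) f < M := Hf.eventually (eventually_lt_atBot M)
  have h2 : ∀ᶠ t : ℝ in atTop, ∀ i, eval (t • d) (g i) ≤ 0 :=
    eventually_all.mpr fun i => (aux_ray (g i) d (hg i)).eventually (eventually_le_atBot 0)
  obtain ⟨t, ht1, ht2⟩ := (h1.and h2).exists
  exact ⟨t • d, ht2, ht1⟩
end

section
/- Positive measure of certifying directions (openness form): let g_0, g_1, …, g_m be nonzero polynomials in n real variables with degrees p_i := totalDegree(g_i), and define the set of certifying directions D* := {d on the unit sphere S^{n−1} ⊆ ℝ^n : for every i ∈ {0,…,m} there exists μ ≥ 1 with φ_{i,μ}(d) < 0 and φ_{i,k}(d) = 0 for all k > μ}. Suppose d_0 ∈ D* satisfies φ_{i,p_i}(d_0) < 0 for every i ∈ {0,…,m}. Then there exists an open set Ũ ⊆ ℝ^n containing d_0 such that Ũ ∩ S^{n−1} ⊆ D*. -/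
open MvPolynomial

theorem stmt_11 (n m : ℕ) (g : Fin (m + 1) → MvPolynomial (Fin n) ℝ)
    (hg : ∀ i, g i ≠ 0)
    (Dstar : Set (EuclideanSpace ℝ (Fin n)))
    (hDstar : Dstar = {d : EuclideanSpace ℝ (Fin n) | ‖d‖ = 1 ∧
      ∀ i : Fin (m + 1), ∃ μ : ℕ, 1 ≤ μ ∧
        MvPolynomial.eval (d : Fin n → ℝ) (MvPolynomial.homogeneousComponent μ (g i)) < 0 ∧
        ∀ k, μ < k →
          MvPolynomial.eval (d : Fin n → ℝ) (MvPolynomial.homogeneousComponent k (g i)) = 0})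
    (d₀ : EuclideanSpace ℝ (Fin n)) (hd₀ : d₀ ∈ Dstar)
    (hlead : ∀ i : Fin (m + 1),
      MvPolynomial.eval (d₀ : Fin n → ℝ)
        (MvPolynomial.homogeneousComponent (g i).totalDegree (g i)) < 0) :
    ∃ U : Set (EuclideanSpace ℝ (Fin n)), IsOpen U ∧ d₀ ∈ U ∧
      U ∩ {d : EuclideanSpace ℝ (Fin n) | ‖d‖ = 1} ⊆ Dstar := by
  -- first: each totalDegree is ≥ 1
  rw [hDstar] at hd₀
  obtain ⟨hnorm, hμ⟩ := hd₀
  have hdeg : ∀ i : Fin (m + 1), 1 ≤ (g i).totalDegree := by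
    intro i
    by_contra h
    push_neg at h
    interval_cases h' : (g i).totalDegree
    obtain ⟨μ, hμ1, hμ2, _⟩ := hμ i
    rw [MvPolynomial.homogeneousComponent_eq_zero μ (g i) (by omega)] at hμ2
    simp at hμ2
  refine ⟨⋂ i : Fin (m + 1), {d : EuclideanSpace ℝ (Fin n) |
      MvPolynomial.eval (d : Fin n → ℝ)
        (MvPolynomial.homogeneousComponent (g i).totalDegree (g i)) < 0}, ?_, ?_, ?_⟩
  · apply isOpen_iInter_of_finite
    intro i
    have hc : Continuous fun d : EuclideanSpace ℝ (Fin n) =>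
        MvPolynomial.eval (d : Fin n → ℝ)
          (MvPolynomial.homogeneousComponent (g i).totalDegree (g i)) :=
      (MvPolynomial.continuous_eval _).comp (PiLp.continuous_ofLp 2 fun _ : Fin n => ℝ)
    exact isOpen_lt hc continuous_const
  · exact Set.mem_iInter.2 fun i => hlead i
  · rintro d ⟨hdU, hdS⟩
    rw [hDstar]
    refine ⟨hdS, fun i => ⟨(g i).totalDegree, hdeg i, Set.mem_iInter.1 hdU i, fun k hk => ?_⟩⟩
    rw [MvPolynomial.homogeneousComponent_eq_zero k (g i) hk]
    simp
end

section
/- Positive measure of certifying directions: let g_0, g_1, …, g_m be nonzero polynomials in n real variables (n ≥ 2) with degrees p_i := totalDegree(g_i), and define D* := {d on the unit sphere S^{n−1} ⊆ ℝ^n : for every i ∈ {0,…,m} there exists μ ≥ 1 with φ_{i,μ}(d) < 0 and φ_{i,k}(d) = 0 for all k > μ}. Suppose there exists d_0 ∈ D* with φ_{i,p_i}(d_0) < 0 for every i ∈ {0,…,m}. Then D* has positive (n−1)-dimensional Hausdorff measure: ℋ^{n−1}(D*) > 0. -/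
open MvPolynomial MeasureTheory Metric Module

/-! The leading forms are negative at `d₀`, hence on an open neighbourhood `W` of `d₀`, and every
unit vector of `W` lies in `D*` (take `μ = p_i`). So it suffices that a nonempty relatively open
subset of the unit sphere of an `n`-dimensional Euclidean space has positive `ℋ^{n-1}`-measure.
Near a unit vector `x`, the sphere is the graph `y ↦ y + √(1 - ‖y‖²) x` over the hyperplane
`x^⊥`; the orthogonal projection onto `x^⊥` is `1`-Lipschitz and maps the piece of the sphere
onto a ball of `x^⊥`, whose `ℋ^{n-1}`-measure is a positive multiple of Lebesgue measure. -/

section SphereChart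

variable {E : Type*} [NormedAddCommGroup E] [InnerProductSpace ℝ E] {x : E}

noncomputable def sphereChart (x : E) (y : (ℝ ∙ x)ᗮ) : E :=
  y + √(1 - ‖y‖ ^ 2) • x

theorem continuous_sphereChart : Continuous (sphereChart x) := by
  unfold sphereChart
  fun_prop

theorem sphereChart_zero : sphereChart x 0 = x := by
  simp [sphereChart]

theorem norm_sphereChart (hx : ‖x‖ = 1) {y : (ℝ ∙ x)ᗮ} (hy : ‖y‖ ≤ 1) :
    ‖sphereChart x y‖ = 1 := by
  have horth : inner ℝ (y : E) (√(1 - ‖y‖ ^ 2) • x) = 0 := by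
    rw [real_inner_smul_right, Submodule.mem_orthogonal_singleton_iff_inner_left.mp y.2, mul_zero]
  have hsq : ‖sphereChart x y‖ ^ 2 = 1 := by
    rw [sphereChart, sq, norm_add_sq_eq_norm_sq_add_norm_sq_real horth, norm_smul,
      Real.norm_of_nonneg (Real.sqrt_nonneg _), hx, mul_one,
      Real.mul_self_sqrt (by nlinarith [norm_nonneg y]), Submodule.coe_norm]
    ring
  nlinarith [norm_nonneg (sphereChart x y)]

theorem orthogonalProjectionOnto_sphereChart (y : (ℝ ∙ x)ᗮ) :
    (ℝ ∙ x)ᗮ.orthogonalProjectionOnto (sphereChart x y) = y := by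
  have hx : (ℝ ∙ x)ᗮ.orthogonalProjectionOnto x = 0 := by
    rw [Submodule.orthogonalProjectionOnto_eq_zero_iff]
    exact Submodule.le_orthogonal_orthogonal _ (Submodule.mem_span_singleton_self x)
  rw [sphereChart, map_add, map_smul, hx, smul_zero, add_zero,
    Submodule.orthogonalProjectionOnto_mem_subspace_eq_self]

theorem exists_ball_subset_image_orthogonalProjectionOnto (hx : ‖x‖ = 1) {U : Set E}
    (hU : IsOpen U) (hxU : x ∈ U) :
    ∃ δ > 0, ball (0 : (ℝ ∙ x)ᗮ) δ ⊆
      (ℝ ∙ x)ᗮ.orthogonalProjectionOnto '' (sphere (0 : E) 1 ∩ U) := by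
  have hU' : sphereChart x ⁻¹' U ∈ nhds 0 :=
    continuous_sphereChart.continuousAt.preimage_mem_nhds
      (by rw [sphereChart_zero]; exact hU.mem_nhds hxU)
  obtain ⟨ε, hε, hεU⟩ := Metric.mem_nhds_iff.mp hU'
  refine ⟨min ε 1, lt_min hε one_pos, fun y hy => ⟨sphereChart x y, ⟨?_, ?_⟩,
    orthogonalProjectionOnto_sphereChart y⟩⟩
  · rw [mem_sphere_zero_iff_norm]
    exact norm_sphereChart hx ((mem_ball_zero_iff.mp hy).le.trans (min_le_right _ _))
  · exact hεU (ball_subset_ball (min_le_left _ _) hy)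

end SphereChart

theorem hausdorffMeasure_sphere_inter_pos {E : Type*} [NormedAddCommGroup E]
    [InnerProductSpace ℝ E] [FiniteDimensional ℝ E] [MeasurableSpace E] [BorelSpace E]
    {x : E} (hx : ‖x‖ = 1) {U : Set E} (hU : IsOpen U) (hxU : x ∈ U) :
    0 < μH[(finrank ℝ E : ℝ) - 1] (sphere (0 : E) 1 ∩ U) := by
  set K := (ℝ ∙ x)ᗮ
  have hx0 : x ≠ 0 := norm_ne_zero_iff.mp (by rw [hx]; exact one_ne_zero)
  have hK : (finrank ℝ K : ℝ) = finrank ℝ E - 1 := by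
    have := Submodule.finrank_add_finrank_orthogonal (ℝ ∙ x)
    rw [finrank_span_singleton hx0] at this
    rw [← this]
    push_cast
    ring
  obtain ⟨δ, hδ, hball⟩ := exists_ball_subset_image_orthogonalProjectionOnto hx hU hxU
  have hP : LipschitzWith 1 K.orthogonalProjectionOnto :=
    K.orthogonalProjectionOnto.lipschitz.weaken (by
      rw [← NNReal.coe_le_coe]; exact Submodule.orthogonalProjectionOnto_norm_le K)
  calc (0 : ENNReal) < μH[(finrank ℝ K : ℝ)] (ball (0 : K) δ) :=
        isOpen_ball.measure_pos _ ⟨0, mem_ball_self hδ⟩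
    _ ≤ μH[(finrank ℝ E : ℝ) - 1] (K.orthogonalProjectionOnto '' (sphere (0 : E) 1 ∩ U)) := by
        rw [hK]; exact measure_mono hball
    _ ≤ μH[(finrank ℝ E : ℝ) - 1] (sphere (0 : E) 1 ∩ U) := by
        simpa using hP.hausdorffMeasure_image_le (by rw [← hK]; positivity) _

theorem le_totalDegree_of_homogeneousComponent_ne_zero {σ R : Type*} [CommSemiring R]
    {p : MvPolynomial σ R} {k : ℕ} (h : homogeneousComponent k p ≠ 0) : k ≤ p.totalDegree :=
  not_lt.mp fun hk => h (homogeneousComponent_eq_zero _ _ hk)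

theorem stmt_12_general (n m : ℕ) (g : Fin (m + 1) → MvPolynomial (Fin n) ℝ)
    (Dstar : Set (EuclideanSpace ℝ (Fin n)))
    (hDstar : Dstar = {d : EuclideanSpace ℝ (Fin n) | ‖d‖ = 1 ∧
      ∀ i : Fin (m + 1), ∃ μ : ℕ, 1 ≤ μ ∧
        MvPolynomial.eval (d : Fin n → ℝ) (MvPolynomial.homogeneousComponent μ (g i)) < 0 ∧
        ∀ k, μ < k →
          MvPolynomial.eval (d : Fin n → ℝ) (MvPolynomial.homogeneousComponent k (g i)) = 0})
    (hex : ∃ d₀ ∈ Dstar, ∀ i : Fin (m + 1),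
      MvPolynomial.eval (d₀ : Fin n → ℝ)
        (MvPolynomial.homogeneousComponent (g i).totalDegree (g i)) < 0) :
    0 < μH[(n : ℝ) - 1] Dstar := by
  obtain ⟨d₀, hd₀D, hd₀⟩ := hex
  rw [hDstar] at hd₀D
  obtain ⟨hnorm, hcert⟩ := hd₀D
  have hdeg : ∀ i, 1 ≤ (g i).totalDegree := fun i => by
    obtain ⟨μ, hμ, hneg, -⟩ := hcert i
    exact hμ.trans (le_totalDegree_of_homogeneousComponent_ne_zero fun h => by simp [h] at hneg)
  set W := {x : EuclideanSpace ℝ (Fin n) | ∀ i,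
    eval (x : Fin n → ℝ) (homogeneousComponent (g i).totalDegree (g i)) < 0}
  have hW : IsOpen W := by
    simp only [W, Set.ofPred_forall]
    exact isOpen_iInter_of_finite fun i => isOpen_lt
      ((continuous_eval _).comp (EuclideanSpace.equiv (Fin n) ℝ).continuous) continuous_const
  have hWD : sphere 0 1 ∩ W ⊆ Dstar := fun x ⟨hx, hxW⟩ => by
    rw [hDstar]
    refine ⟨mem_sphere_zero_iff_norm.mp hx, fun i => ⟨_, hdeg i, hxW i, fun k hk => ?_⟩⟩
    rw [homogeneousComponent_eq_zero _ _ hk, map_zero]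
  have := hausdorffMeasure_sphere_inter_pos hnorm hW hd₀
  rw [finrank_euclideanSpace_fin] at this
  exact this.trans_le (measure_mono hWD)

theorem stmt_12 (n m : ℕ) (hn : 2 ≤ n) (g : Fin (m + 1) → MvPolynomial (Fin n) ℝ)
    (hg : ∀ i, g i ≠ 0)
    (Dstar : Set (EuclideanSpace ℝ (Fin n)))
    (hDstar : Dstar = {d : EuclideanSpace ℝ (Fin n) | ‖d‖ = 1 ∧
      ∀ i : Fin (m + 1), ∃ μ : ℕ, 1 ≤ μ ∧
        MvPolynomial.eval (d : Fin n → ℝ) (MvPolynomial.homogeneousComponent μ (g i)) < 0 ∧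
        ∀ k, μ < k →
          MvPolynomial.eval (d : Fin n → ℝ) (MvPolynomial.homogeneousComponent k (g i)) = 0})
    (hex : ∃ d₀ ∈ Dstar, ∀ i : Fin (m + 1),
      MvPolynomial.eval (d₀ : Fin n → ℝ)
        (MvPolynomial.homogeneousComponent (g i).totalDegree (g i)) < 0) :
    0 < μH[(n : ℝ) - 1] Dstar :=
  stmt_12_general n m g Dstar hDstar hex
end

section
/- Analytic pullback: let n ≥ 2, let φ be a nonzero homogeneous polynomial in n real variables, and let d* be a point of the unit sphere S^{n−1} ⊆ ℝ^n. Then there exist an open set V ⊆ ℝ^{n−1}, a relatively open subset U of S^{n−1} containing d*, and a map Ψ : ℝ^{n−1} → ℝ^n that is real-analytic on V with Ψ(V) = U, such that the composition u ↦ φ(Ψ(u)) is real-analytic on V and not identically zero on V, and the set E := {u ∈ V : φ(Ψ(u)) = 0} has (n−1)-dimensional Lebesgue measure zero. -/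
/-!
Pick a coordinate `i` with `dstar i ≠ 0` and parametrize the open hemisphere `{τ x_i > 0}`
containing `dstar` (with `τ = ±1`) as the graph `u ↦ (u, τ √(1 - ‖u‖²))` over the unit ball.
If `φ` vanished on that hemisphere, homogeneity would make it vanish on an open half-space,
forcing `φ = 0`. For the null set, reduce `φ(u, t) ≡ a(u) + b(u) t` modulo `t² = 1 - ‖u‖²`:
the product of the pullbacks of `φ` along the two opposite charts is then the polynomial
`Q = a² - (1 - ‖u‖²) b²`. Both factors are analytic and not identically zero on the connected
ball, so `Q ≠ 0`, and the zero set of the pullback lies in the null zero set of `Q`.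
-/

open MvPolynomial MeasureTheory Metric

namespace MvPolynomial

theorem eval_cons_eq_eval_eval_finSuccEquiv {R : Type*} [CommRing R] {m : ℕ}
    (f : MvPolynomial (Fin (m + 1)) R) (a : R) (y : Fin m → R) :
    eval (Fin.cons a y) f = eval y (Polynomial.eval (C a) (finSuccEquiv R m f)) := by
  rw [eval_eq_eval_mv_eval', Polynomial.eval_map, ← Polynomial.eval₂_at_apply, eval_C]

theorem volume_setOf_eval_eq_zero {m : ℕ} {f : MvPolynomial (Fin m) ℝ} (hf : f ≠ 0) :
    volume {x : Fin m → ℝ | eval x f = 0} = 0 := by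
  induction m with
  | zero =>
    obtain ⟨c, rfl⟩ := C_surjective (Fin 0) f
    simp_all
  | succ m ih =>
    set q := finSuccEquiv ℝ m f
    have hq : q ≠ 0 := (map_ne_zero_iff _ (finSuccEquiv ℝ m).injective).2 hf
    set S : Set (ℝ × (Fin m → ℝ)) := {z | eval (Fin.cons z.1 z.2) f = 0}
    have hS : MeasurableSet S :=
      measurableSet_eq_fun ((continuous_eval f).measurable.comp (by fun_prop)) measurable_const
    have hpre : {x : Fin (m + 1) → ℝ | eval x f = 0}
        = MeasurableEquiv.piFinSuccAbove (fun _ => ℝ) 0 ⁻¹' S := by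
      ext x
      simp [S, Fin.cons_self_tail]
    rw [hpre, (volume_preserving_piFinSuccAbove (fun _ => ℝ) 0).measure_preimage
      hS.nullMeasurableSet, Measure.volume_eq_prod, Measure.measure_prod_null hS]
    -- The slice over `a` is the zero set of `q(a) ≠ 0`, except at the finitely many roots of `q`.
    have hroots : {a : ℝ | Polynomial.eval (C a) q = 0}.Finite :=
      ((Polynomial.finite_setOfPred_isRoot hq).preimage (C_injective _ _).injOn)
    refine measure_mono_null (fun a ha => ?_) (hroots.measure_zero _)
    by_contra hqa
    exact ha (by simpa [S, eval_cons_eq_eval_eval_finSuccEquiv] using ih hqa)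

theorem volume_setOf_eval_euclidean_eq_zero {m : ℕ} {f : MvPolynomial (Fin m) ℝ} (hf : f ≠ 0) :
    volume {x : EuclideanSpace ℝ (Fin m) | eval (x : Fin m → ℝ) f = 0} = 0 := by
  have h := volume_setOf_eval_eq_zero hf
  rwa [← (EuclideanSpace.volume_preserving_symm_measurableEquiv_toLp (Fin m)).measure_preimage
    (measurableSet_eq_fun (continuous_eval f).measurable measurable_const).nullMeasurableSet] at h

theorem IsHomogeneous.eval_smul_s13 {R σ : Type*} [CommRing R] [Fintype σ] {φ : MvPolynomial σ R}
    {p : ℕ} (hφ : φ.IsHomogeneous p) (c : R) (x : σ → R) :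
    eval (c • x) φ = c ^ p * eval x φ := by
  rw [eval_eq', eval_eq', Finset.mul_sum]
  refine Finset.sum_congr rfl fun d hd => ?_
  have hdeg : ∑ i, d i = p := by
    simpa [Finsupp.weight_apply, Finsupp.sum_fintype] using hφ (mem_support_iff.1 hd)
  simp_rw [Pi.smul_apply, smul_eq_mul, mul_pow, Finset.prod_mul_distrib,
    Finset.prod_pow_eq_pow_sum, hdeg]
  ring

theorem eq_zero_of_isOpen_of_eval_eq_zero {σ : Type*} [Fintype σ] {f : MvPolynomial σ ℝ}
    {s : Set (σ → ℝ)} (hs : IsOpen s) (hne : s.Nonempty) (h : ∀ x ∈ s, eval x f = 0) : f = 0 := by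
  obtain ⟨x₀, hx₀⟩ := hne
  have hzero := (AnalyticOnNhd.eval_mvPolynomial f).eqOn_zero_of_preconnected_of_eventuallyEq_zero
    isPreconnected_univ (Set.mem_univ x₀) (Filter.eventuallyEq_of_mem (hs.mem_nhds hx₀) h)
  exact funext fun x => by simpa using hzero (Set.mem_univ x)

theorem exists_eval_insertNth_eq_of_sq_eq {R : Type*} [CommRing R] {m : ℕ}
    (φ : MvPolynomial (Fin (m + 1)) R) (i : Fin (m + 1)) (r : MvPolynomial (Fin m) R) :
    ∃ a b : MvPolynomial (Fin m) R, ∀ (t : R) (u : Fin m → R), t ^ 2 = eval u r →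
      eval (i.insertNth t u) φ = eval u a + eval u b * t := by
  induction φ using MvPolynomial.induction_on with
  | C c => exact ⟨C c, 0, by simp⟩
  | add p q hp hq =>
    obtain ⟨a, b, h⟩ := hp
    obtain ⟨a', b', h'⟩ := hq
    exact ⟨a + a', b + b', fun t u ht => by simp only [map_add, h t u ht, h' t u ht]; ring⟩
  | mul_X p j hp =>
    obtain ⟨a, b, h⟩ := hp
    obtain rfl | ⟨k, rfl⟩ := i.eq_self_or_eq_succAbove j
    · exact ⟨b * r, a, fun t u ht => by simp [h t u ht, ← ht]; ring⟩
    · exact ⟨a * X k, b * X k, fun t u ht => by simp [h t u ht]; ring⟩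

theorem exists_eval_insertNth_mul_eval_insertNth_neg {R : Type*} [CommRing R] {m : ℕ}
    (φ : MvPolynomial (Fin (m + 1)) R) (i : Fin (m + 1)) (r : MvPolynomial (Fin m) R) :
    ∃ Q : MvPolynomial (Fin m) R, ∀ (t : R) (u : Fin m → R), t ^ 2 = eval u r →
      eval (i.insertNth t u) φ * eval (i.insertNth (-t) u) φ = eval u Q := by
  obtain ⟨a, b, h⟩ := exists_eval_insertNth_eq_of_sq_eq φ i r
  refine ⟨a ^ 2 - r * b ^ 2, fun t u ht => ?_⟩
  rw [h t u ht, h (-t) u (by rwa [neg_sq]), map_sub, map_mul, map_pow, map_pow, ← ht]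
  ring

theorem IsHomogeneous.eq_zero_of_eval_hemisphere_eq_zero {ι : Type*} [Fintype ι]
    {φ : MvPolynomial ι ℝ} {p : ℕ} (hφ : φ.IsHomogeneous p) (i : ι) {τ : ℝ} (hτ : τ ≠ 0)
    (h : ∀ y ∈ {x : EuclideanSpace ℝ ι | 0 < τ * x i} ∩ {x | ‖x‖ = 1}, eval (y : ι → ℝ) φ = 0) :
    φ = 0 := by
  refine eq_zero_of_isOpen_of_eval_eq_zero (s := {x | 0 < τ * x i})
    (isOpen_lt continuous_const (by fun_prop)) ⟨fun _ => τ, mul_self_pos.2 hτ⟩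
    fun x hx => ?_
  set y : EuclideanSpace ℝ ι := WithLp.toLp 2 x
  have hy : y ≠ 0 := by
    rintro hy0
    have : x i = 0 := congrFun (congrArg WithLp.ofLp hy0) i
    simp [this] at hx
  have hx' : x = ‖y‖ • (‖y‖⁻¹ • y : EuclideanSpace ℝ ι).ofLp := by
    simp [smul_smul, norm_ne_zero_iff.2 hy, y]
  rw [hx', hφ.eval_smul_s13, h _ ⟨?_, ?_⟩, mul_zero]
  · show 0 < τ * (‖y‖⁻¹ * x i)
    rw [mul_left_comm]
    exact mul_pos (inv_pos.2 (norm_pos_iff.2 hy)) hx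
  · show ‖‖y‖⁻¹ • y‖ = 1
    rw [norm_smul, norm_inv, norm_norm, inv_mul_cancel₀ (norm_ne_zero_iff.2 hy)]

end MvPolynomial

theorem one_sub_norm_sq_pos_of_mem_ball {E : Type*} [SeminormedAddCommGroup E] {u : E}
    (hu : u ∈ ball 0 1) : 0 < 1 - ‖u‖ ^ 2 := by
  rw [mem_ball_zero_iff] at hu
  nlinarith [norm_nonneg u]

theorem Real.analyticAt_sqrt {x : ℝ} (hx : 0 < x) : AnalyticAt ℝ Real.sqrt x := by
  have hexp : AnalyticAt ℝ (fun y => Real.exp (Real.log y * (1 / 2))) x :=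
    ((analyticAt_log hx).mul analyticAt_const).rexp'
  refine hexp.congr ?_
  filter_upwards [Ioi_mem_nhds hx] with y hy
  rw [Real.sqrt_eq_rpow, Real.rpow_def_of_pos hy]

theorem AnalyticOnNhd.eval_mvPolynomial_euclidean {E ι : Type*} [NormedAddCommGroup E]
    [NormedSpace ℝ E] [Fintype ι] {f : E → EuclideanSpace ℝ ι} {s : Set E}
    (hf : AnalyticOnNhd ℝ f s) (φ : MvPolynomial ι ℝ) :
    AnalyticOnNhd ℝ (fun x => eval (f x : ι → ℝ) φ) s :=
  (AnalyticOnNhd.eval_mvPolynomial φ).comp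
    ((PiLp.continuousLinearEquiv 2 ℝ fun _ : ι => ℝ).analyticOnNhd _ |>.comp hf
      (Set.mapsTo_univ _ _)) (Set.mapsTo_univ _ _)

theorem AnalyticOnNhd.eqOn_zero_or_eqOn_zero_of_mul_eq_zero {𝕜 E : Type*}
    [NontriviallyNormedField 𝕜] [CompleteSpace 𝕜] [NormedAddCommGroup E] [NormedSpace 𝕜 E]
    {f g : E → 𝕜} {U : Set E} (hf : AnalyticOnNhd 𝕜 f U) (hg : AnalyticOnNhd 𝕜 g U)
    (hU : IsPreconnected U) (hUo : IsOpen U) (h : ∀ x ∈ U, f x * g x = 0) :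
    Set.EqOn f 0 U ∨ Set.EqOn g 0 U := by
  refine or_iff_not_imp_left.2 fun hf0 => ?_
  obtain ⟨x₀, hx₀, hfx₀⟩ : ∃ x ∈ U, f x ≠ 0 := by simpa [Set.EqOn] using hf0
  refine hg.eqOn_zero_of_preconnected_of_eventuallyEq_zero hU hx₀ ?_
  filter_upwards [(hf x₀ hx₀).continuousAt.eventually_ne hfx₀, hUo.mem_nhds hx₀] with x hfx hx
  exact (mul_eq_zero.1 (h x hx)).resolve_left hfx

noncomputable def hemisphereChart {m : ℕ} (i : Fin (m + 1)) (τ : ℝ)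
    (u : EuclideanSpace ℝ (Fin m)) : EuclideanSpace ℝ (Fin (m + 1)) :=
  WithLp.toLp 2 (i.insertNth (τ * √(1 - ‖u‖ ^ 2)) (u : Fin m → ℝ))

section hemisphereChart

variable {m : ℕ} (i : Fin (m + 1))

@[simp]
theorem hemisphereChart_apply_self (τ : ℝ) (u : EuclideanSpace ℝ (Fin m)) :
    hemisphereChart i τ u i = τ * √(1 - ‖u‖ ^ 2) :=
  Fin.insertNth_apply_same (α := fun _ => ℝ) _ _ _

@[simp]
theorem hemisphereChart_apply_succAbove (τ : ℝ) (u : EuclideanSpace ℝ (Fin m)) (k : Fin m) :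
    hemisphereChart i τ u (i.succAbove k) = u k :=
  Fin.insertNth_apply_succAbove (α := fun _ => ℝ) _ _ _ _

theorem analyticOnNhd_hemisphereChart (τ : ℝ) :
    AnalyticOnNhd ℝ (hemisphereChart i τ) (ball 0 1) := by
  have hcoord (k : Fin m) :
      AnalyticOnNhd ℝ (fun u : EuclideanSpace ℝ (Fin m) => u k) (ball 0 1) :=
    fun u _ => (EuclideanSpace.proj (𝕜 := ℝ) k).analyticAt u
  have hsqrt :
      AnalyticOnNhd ℝ (fun u : EuclideanSpace ℝ (Fin m) => √(1 - ‖u‖ ^ 2)) (ball 0 1) := by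
    intro u hu
    refine (Real.analyticAt_sqrt (one_sub_norm_sq_pos_of_mem_ball hu)).comp
      (f := fun u : EuclideanSpace ℝ (Fin m) => 1 - ‖u‖ ^ 2) ?_
    simp_rw [EuclideanSpace.real_norm_sq_eq]
    exact analyticAt_const.sub (Finset.analyticAt_fun_sum _ fun k _ => (hcoord k u hu).pow 2)
  have hpi : AnalyticOnNhd ℝ
      (fun u : EuclideanSpace ℝ (Fin m) => (hemisphereChart i τ u : Fin (m + 1) → ℝ))
      (ball 0 1) := by
    refine AnalyticOnNhd.pi fun j => ?_
    obtain rfl | ⟨k, rfl⟩ := i.eq_self_or_eq_succAbove j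
    · simpa using analyticOnNhd_const.mul hsqrt
    · simpa using hcoord k
  exact ((PiLp.continuousLinearEquiv 2 ℝ fun _ : Fin (m + 1) => ℝ).symm.analyticOnNhd _).comp hpi
    (Set.mapsTo_univ _ _)

theorem image_hemisphereChart {τ : ℝ} (hτ : |τ| = 1) :
    hemisphereChart i τ '' ball 0 1 = {x | 0 < τ * x i} ∩ {x | ‖x‖ = 1} := by
  have hτ2 : τ ^ 2 = 1 := by rw [← sq_abs, hτ, one_pow]
  ext y
  constructor
  · rintro ⟨u, hu, rfl⟩
    have hpos := one_sub_norm_sq_pos_of_mem_ball hu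
    refine ⟨?_, ?_⟩
    · show 0 < τ * hemisphereChart i τ u i
      rw [hemisphereChart_apply_self, ← mul_assoc, ← sq, hτ2, one_mul]
      exact Real.sqrt_pos.2 hpos
    · show ‖hemisphereChart i τ u‖ = 1
      rw [← pow_eq_one_iff_of_nonneg (norm_nonneg _) two_ne_zero,
        EuclideanSpace.real_norm_sq_eq, Fin.sum_univ_succAbove _ i]
      simp [mul_pow, hτ2, Real.sq_sqrt hpos.le, ← EuclideanSpace.real_norm_sq_eq]
  · rintro ⟨hyi, hy⟩
    set u : EuclideanSpace ℝ (Fin m) := WithLp.toLp 2 (i.removeNth y)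
    have hu : ‖u‖ ^ 2 = 1 - y i ^ 2 := by
      have hy2 : ‖y‖ ^ 2 = 1 := by rw [show ‖y‖ = 1 from hy, one_pow]
      rw [EuclideanSpace.real_norm_sq_eq, Fin.sum_univ_succAbove _ i] at hy2
      rw [EuclideanSpace.real_norm_sq_eq, ← hy2, add_sub_cancel_left]
      rfl
    refine ⟨u, ?_, ?_⟩
    · rw [mem_ball_zero_iff, ← sq_lt_one_iff₀ (norm_nonneg _), hu]
      have : y i ≠ 0 := by rintro h; simp [h] at hyi
      have := pow_pos (abs_pos.2 this) 2
      rw [sq_abs] at this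
      linarith
    · ext j
      refine Fin.succAboveCases i ?_ (fun k => ?_) j
      · have habs : |y i| = τ * y i := by
          rw [← one_mul |y i|, ← hτ, ← abs_mul, abs_of_pos hyi]
        rw [hemisphereChart_apply_self, hu, sub_sub_cancel, Real.sqrt_sq_eq_abs, habs,
          ← mul_assoc, ← sq, hτ2, one_mul]
      · exact hemisphereChart_apply_succAbove i τ u k

theorem not_forall_eval_hemisphereChart_eq_zero {φ : MvPolynomial (Fin (m + 1)) ℝ} {p : ℕ}
    (hφ : φ ≠ 0) (hhom : φ.IsHomogeneous p) {τ : ℝ} (hτ : |τ| = 1) :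
    ¬ ∀ u ∈ ball 0 1, eval (hemisphereChart i τ u : Fin (m + 1) → ℝ) φ = 0 := by
  intro h
  refine hφ (hhom.eq_zero_of_eval_hemisphere_eq_zero i (τ := τ) (by rintro rfl; simp at hτ) ?_)
  rw [← image_hemisphereChart i hτ]
  rintro _ ⟨u, hu, rfl⟩
  exact h u hu

theorem volume_setOf_eval_hemisphereChart_eq_zero {φ : MvPolynomial (Fin (m + 1)) ℝ} {p : ℕ}
    (hφ : φ ≠ 0) (hhom : φ.IsHomogeneous p) {τ : ℝ} (hτ : |τ| = 1) :
    volume {u ∈ ball 0 1 | eval (hemisphereChart i τ u : Fin (m + 1) → ℝ) φ = 0} = 0 := by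
  obtain ⟨Q, hQ⟩ := exists_eval_insertNth_mul_eval_insertNth_neg φ i (1 - ∑ k, X k ^ 2)
  have hFG : ∀ u ∈ ball 0 1, eval (hemisphereChart i τ u : Fin (m + 1) → ℝ) φ *
      eval (hemisphereChart i (-τ) u : Fin (m + 1) → ℝ) φ = eval (u : Fin m → ℝ) Q := by
    intro u hu
    have hpos := one_sub_norm_sq_pos_of_mem_ball hu
    have hτ2 : τ ^ 2 = 1 := by rw [← sq_abs, hτ, one_pow]
    have ht : (τ * √(1 - ‖u‖ ^ 2)) ^ 2 = eval (u : Fin m → ℝ) (1 - ∑ k, X k ^ 2) := by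
      rw [mul_pow, hτ2, one_mul, Real.sq_sqrt hpos.le]
      simp [EuclideanSpace.real_norm_sq_eq]
    have := hQ _ _ ht
    rwa [← neg_mul] at this
  have hQ0 : Q ≠ 0 := by
    rintro rfl
    have hanalytic (σ : ℝ) := (analyticOnNhd_hemisphereChart i σ).eval_mvPolynomial_euclidean φ
    rcases (hanalytic τ).eqOn_zero_or_eqOn_zero_of_mul_eq_zero (hanalytic (-τ))
      (convex_ball 0 1).isPreconnected isOpen_ball (by simpa using hFG) with h | h
    · exact not_forall_eval_hemisphereChart_eq_zero i hφ hhom hτ h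
    · exact not_forall_eval_hemisphereChart_eq_zero i hφ hhom (by rwa [abs_neg]) h
  refine measure_mono_null (fun u ⟨hu, hFu⟩ => ?_) (volume_setOf_eval_euclidean_eq_zero hQ0)
  show eval (u : Fin m → ℝ) Q = 0
  rw [← hFG u hu, hFu, zero_mul]

end hemisphereChart

theorem stmt_13_general (n : ℕ) (p : ℕ) (φ : MvPolynomial (Fin n) ℝ)
    (hφ : φ ≠ 0) (hhom : φ.IsHomogeneous p)
    (dstar : EuclideanSpace ℝ (Fin n)) (hdstar : ‖dstar‖ = 1) :
    ∃ (V : Set (EuclideanSpace ℝ (Fin (n - 1))))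
      (U : Set (EuclideanSpace ℝ (Fin n)))
      (Ψ : EuclideanSpace ℝ (Fin (n - 1)) → EuclideanSpace ℝ (Fin n)),
      IsOpen V ∧
      (∃ Ut : Set (EuclideanSpace ℝ (Fin n)), IsOpen Ut ∧
        U = Ut ∩ {d : EuclideanSpace ℝ (Fin n) | ‖d‖ = 1}) ∧
      dstar ∈ U ∧
      AnalyticOnNhd ℝ Ψ V ∧
      Ψ '' V = U ∧
      AnalyticOnNhd ℝ (fun u => MvPolynomial.eval (Ψ u : Fin n → ℝ) φ) V ∧
      ¬ (∀ u ∈ V, MvPolynomial.eval (Ψ u : Fin n → ℝ) φ = 0) ∧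
      MeasureTheory.volume {u ∈ V | MvPolynomial.eval (Ψ u : Fin n → ℝ) φ = 0} = 0 := by
  obtain ⟨i, hi⟩ : ∃ i, dstar i ≠ 0 := by
    by_contra! h
    have : dstar = 0 := WithLp.ofLp_injective 2 (funext h)
    simp [this] at hdstar
  obtain ⟨m, rfl⟩ : ∃ m, n = m + 1 := ⟨n - 1, by have := i.pos; omega⟩
  obtain ⟨τ, hτ, hτi⟩ : ∃ τ : ℝ, |τ| = 1 ∧ 0 < τ * dstar i :=
    ⟨Real.sign (dstar i),
      by rcases Real.sign_apply_eq_of_ne_zero _ hi with h | h <;> simp [h],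
      Real.sign_mul_pos_of_ne_zero _ hi⟩
  exact ⟨ball 0 1, _, hemisphereChart i τ, isOpen_ball,
    ⟨{x | 0 < τ * x i}, isOpen_lt continuous_const (by fun_prop), rfl⟩,
    ⟨hτi, hdstar⟩, analyticOnNhd_hemisphereChart i τ,
    image_hemisphereChart i hτ, (analyticOnNhd_hemisphereChart i τ).eval_mvPolynomial_euclidean φ,
    not_forall_eval_hemisphereChart_eq_zero i hφ hhom hτ,
    volume_setOf_eval_hemisphereChart_eq_zero i hφ hhom hτ⟩

theorem stmt_13 (n : ℕ) (hn : 2 ≤ n) (p : ℕ) (φ : MvPolynomial (Fin n) ℝ)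
    (hφ : φ ≠ 0) (hhom : φ.IsHomogeneous p)
    (dstar : EuclideanSpace ℝ (Fin n)) (hdstar : ‖dstar‖ = 1) :
    ∃ (V : Set (EuclideanSpace ℝ (Fin (n - 1))))
      (U : Set (EuclideanSpace ℝ (Fin n)))
      (Ψ : EuclideanSpace ℝ (Fin (n - 1)) → EuclideanSpace ℝ (Fin n)),
      IsOpen V ∧
      (∃ Ut : Set (EuclideanSpace ℝ (Fin n)), IsOpen Ut ∧
        U = Ut ∩ {d : EuclideanSpace ℝ (Fin n) | ‖d‖ = 1}) ∧
      dstar ∈ U ∧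
      AnalyticOnNhd ℝ Ψ V ∧
      Ψ '' V = U ∧
      AnalyticOnNhd ℝ (fun u => MvPolynomial.eval (Ψ u : Fin n → ℝ) φ) V ∧
      ¬ (∀ u ∈ V, MvPolynomial.eval (Ψ u : Fin n → ℝ) φ = 0) ∧
      MeasureTheory.volume {u ∈ V | MvPolynomial.eval (Ψ u : Fin n → ℝ) φ = 0} = 0 :=
  stmt_13_general n p φ hφ hhom dstar hdstar
end
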